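/- arXiv:2210.07552 — 3 statements merged into one kernel-verified Lean document; each statement's English description precedes it below -/
import Mathlib

section
/- Let w̃^α_n ∈ ℂ[[t^*_*, ε]] (1 ≤ α ≤ N, n ≥ 0) be a family of formal power series in normal form, i.e., w̃^α_n = t^α_n + δ_{n,1}A^α + R^α_n + O(ε²) with R^α_n ∈ ℂ[[t^*_*]]^{(n+1)}. If P, Q ∈ 𝒜̂_w are differential polynomials such that the substitutions satisfy P|_{w^α_a = w̃^α_a} = Q|_{w^α_a = w̃^α_a} in ℂ[[t^*_*, ε]], then P = Q. -/
open scoped Classical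

noncomputable section

/-- Index type for the formal variables: `Sum.inl (α, a)` represents `t^α_a` (equivalently,
`w^α_a` for differential polynomials), and `Sum.inr ()` represents `ε`. -/
abbrev Var (N : ℕ) : Type := (Fin N × ℕ) ⊕ Unit

/-- The ring `ℂ[[t^*_*, ε]]` (equivalently, the ambient ring containing `𝒜̂_w`). -/
abbrev FPS (N : ℕ) : Type := MvPowerSeries (Var N) ℂ

/-- The variable `ε`. -/
abbrev epsV (N : ℕ) : Var N := Sum.inr ()

/-- Coefficient of the monomial `m` in `F`. -/
def cf {N : ℕ} (m : Var N →₀ ℕ) (F : FPS N) : ℂ := MvPowerSeries.coeff m F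

/-- Build a power series from its coefficient function. -/
def ofCf {N : ℕ} (f : (Var N →₀ ℕ) → ℂ) : FPS N := f

/-- Total subscript weight of a monomial: for `t^{α₁}_{d₁} ⋯ t^{α_j}_{d_j}` this is
`d₁ + ⋯ + d_j` (counted with multiplicity). -/
def tweight {N : ℕ} (m : Var N →₀ ℕ) : ℕ :=
  m.sum fun v k =>
    match v with
    | Sum.inl (_, a) => a * k
    | Sum.inr _ => 0

/-- Membership in the ideal `ℂ[[t^*_*]]^{(d)} ⊆ ℂ[[t^*_*, ε]]`. -/
def InIdeal {N : ℕ} (d : ℕ) (R : FPS N) : Prop :=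
  ∀ m : Var N →₀ ℕ, cf m R ≠ 0 → m (epsV N) = 0 ∧ d ≤ tweight m

/-- The family `w̃^α_n` is in normal form:
`w̃^α_n = t^α_n + δ_{n,1} A^α + R^α_n + O(ε²)` with `R^α_n ∈ ℂ[[t^*_*]]^{(n+1)}`. -/
def NormalForm {N : ℕ} (A : Fin N → ℂ) (w : Fin N → ℕ → FPS N) : Prop :=
  ∀ (α : Fin N) (n : ℕ), ∃ R S : FPS N, InIdeal (n + 1) R ∧
    w α n = MvPowerSeries.X (Sum.inl (α, n))
      + (MvPowerSeries.C : ℂ →+* FPS N) (if n = 1 then A α else 0)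
      + R + MvPowerSeries.X (epsV N) ^ 2 * S

/-- The "shape" of a monomial in the variables `w^α_d` with `d ≥ 1` (the positive variables). -/
def posShape {N : ℕ} (m : Var N →₀ ℕ) : (Fin N × ℕ) → ℕ :=
  fun p => if 1 ≤ p.2 then m (Sum.inl p) else 0

/-- `P` is a differential polynomial from `𝒜̂_w = 𝒜_w[[ε]]`,
`𝒜_w = ℂ[[w^*_0]][w^*_{≥1}]`: for each power `k` of `ε`, the `ε^k`-slice of `P` is a formal
power series in the `w^α_0` whose coefficients are polynomials in the `w^α_d`, `d ≥ 1`; i.e.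
only finitely many monomial shapes in the positive variables occur in it. -/
def IsDiffPoly {N : ℕ} (P : FPS N) : Prop :=
  ∀ k : ℕ,
    {s : (Fin N × ℕ) → ℕ |
      ∃ m : Var N →₀ ℕ, cf m P ≠ 0 ∧ m (epsV N) = k ∧ posShape m = s}.Finite

/-- Evaluation of a monomial `m` on the family `f`. -/
def prodPow {N : ℕ} (f : Var N → FPS N) (m : Var N →₀ ℕ) : FPS N :=
  m.prod fun v k => f v ^ k

/-- Coefficient-wise substitution of the family `f` into `G`. -/
def evalFam {N : ℕ} (f : Var N → FPS N) (G : FPS N) : FPS N :=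
  ofCf fun μ => ∑ᶠ m : Var N →₀ ℕ, cf m G * cf μ (prodPow f m)

/-- The substitution family `w^α_a ↦ w̃^α_a`, `ε ↦ ε`. -/
def substFam {N : ℕ} (w : Fin N → ℕ → FPS N) : Var N → FPS N :=
  fun v =>
    match v with
    | Sum.inl (α, a) => w α a
    | Sum.inr _ => MvPowerSeries.X (epsV N)

/-!
Write `w̃^α_a = g^α_a + δ_{a,1} A^α` with `g` free of constant terms. Each `ε`-slice of an
element of `𝒜̂_w` is polynomial in the `w^α_1`, so substituting `w̃` amounts to translating
`w^α_1 ↦ w^α_1 + A^α` and then substituting `g`. Both steps are unitriangular, hence injective.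
The translation only lowers the degree in the `w^α_1`, which is bounded on each `ε`-slice of a
differential polynomial. Since `g^α_n = t^α_n + R^α_n + O(ε²)` with `R^α_n` of subscript weight
`> n`, substituting `g` only raises monomials in the lexicographic order on
(`ε`-degree, subscript weight), which is well founded. Substitution is linear on differential
polynomials, as all the sums involved are finite, so it suffices to treat `P - Q`.
-/

theorem Finsupp.prod_pow_induction {σ M : Type*} [CommMonoid M] (f : σ → M)
    (p : (σ →₀ ℕ) → M → Prop) (one : p 0 1)
    (mul : ∀ m₁ m₂ a b, p m₁ a → p m₂ b → p (m₁ + m₂) (a * b))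
    (single : ∀ v, p (Finsupp.single v 1) (f v)) (m : σ →₀ ℕ) :
    p m (m.prod fun v k => f v ^ k) := by
  induction m using Finsupp.induction with
  | zero => simpa using one
  | single_add v k m _ _ ih =>
    have pow : ∀ k, p (Finsupp.single v k) (f v ^ k) := by
      intro k
      induction k with
      | zero => simpa using one
      | succ k ihk => simpa [Finsupp.single_add, pow_succ] using mul _ _ _ _ ihk (single v)
    rw [Finsupp.prod_add_index' (by simp) (fun _ _ _ => pow_add _ _ _),
      Finsupp.prod_single_index (by simp)]
    exact mul _ _ _ _ (pow k) ih

theorem finsum_comm_of_finite {α β M : Type*} [AddCommMonoid M] (f : α → β → M)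
    (h : (Function.support (Function.uncurry f)).Finite) :
    ∑ᶠ a, ∑ᶠ b, f a b = ∑ᶠ b, ∑ᶠ a, f a b := by
  have h' : (Function.support fun ba : β × α => f ba.2 ba.1).Finite :=
    h.preimage (Equiv.prodComm β α).injective.injOn
  calc ∑ᶠ a, ∑ᶠ b, f a b = ∑ᶠ ab : α × β, f ab.1 ab.2 := (finsum_curry _ h).symm
    _ = ∑ᶠ ba : β × α, f ba.2 ba.1 := (finsum_comp_equiv (Equiv.prodComm β α)).symm
    _ = ∑ᶠ b, ∑ᶠ a, f a b := finsum_curry _ h'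

namespace MvPowerSeries

variable {σ τ R : Type*} [CommSemiring R]

structure IsAddStrictOrder (r : (σ →₀ ℕ) → (σ →₀ ℕ) → Prop) : Prop where
  irrefl : ∀ a, ¬ r a a
  trans : ∀ {a b c}, r a b → r b c → r a c
  add_right : ∀ {a b} c, r a b → r (a + c) (b + c)

namespace IsAddStrictOrder

variable {r : (σ →₀ ℕ) → (σ →₀ ℕ) → Prop}

theorem add_left (hr : IsAddStrictOrder r) {a b : σ →₀ ℕ} (c : σ →₀ ℕ) (h : r a b) :
    r (c + a) (c + b) := by
  simpa only [add_comm c] using hr.add_right c h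

theorem add_of_eq_or {m₁ m₂ p q : σ →₀ ℕ} (hr : IsAddStrictOrder r)
    (hp : p = m₁ ∨ r m₁ p) (hq : q = m₂ ∨ r m₂ q) (hne : ¬(p = m₁ ∧ q = m₂)) :
    r (m₁ + m₂) (p + q) := by
  rcases hp with rfl | hp <;> rcases hq with rfl | hq
  · exact absurd ⟨rfl, rfl⟩ hne
  · exact hr.add_left _ hq
  · exact hr.add_right _ hp
  · exact hr.trans (hr.add_right m₂ hp) (hr.add_left p hq)

end IsAddStrictOrder

def HasLeadingTerm (r : (σ →₀ ℕ) → (σ →₀ ℕ) → Prop) (m : σ →₀ ℕ)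
    (F : MvPowerSeries σ R) : Prop :=
  coeff m F = 1 ∧ ∀ μ, coeff μ F ≠ 0 → μ = m ∨ r m μ

theorem HasLeadingTerm.one (r : (σ →₀ ℕ) → (σ →₀ ℕ) → Prop) :
    HasLeadingTerm r 0 (1 : MvPowerSeries σ R) := by
  refine ⟨by simp, fun μ hμ => Or.inl ?_⟩
  by_contra h
  simp [coeff_one, h] at hμ

theorem HasLeadingTerm.mul {r : (σ →₀ ℕ) → (σ →₀ ℕ) → Prop} (hr : IsAddStrictOrder r)
    {m₁ m₂ : σ →₀ ℕ} {F G : MvPowerSeries σ R} (hF : HasLeadingTerm r m₁ F)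
    (hG : HasLeadingTerm r m₂ G) : HasLeadingTerm r (m₁ + m₂) (F * G) := by
  constructor
  · rw [coeff_mul, Finset.sum_eq_single_of_mem (m₁, m₂) (by simp), hF.1, hG.1, one_mul]
    rintro ⟨p, q⟩ hpq hne
    by_contra h
    have hp := left_ne_zero_of_mul h
    have hq := right_ne_zero_of_mul h
    have := hr.add_of_eq_or (hF.2 p hp) (hG.2 q hq) fun ⟨e₁, e₂⟩ => hne (by rw [e₁, e₂])
    rw [Finset.HasAntidiagonal.mem_antidiagonal.mp hpq] at this
    exact hr.irrefl _ this
  · intro μ hμ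
    rw [coeff_mul] at hμ
    obtain ⟨⟨p, q⟩, hpq, h⟩ := Finset.exists_ne_zero_of_sum_ne_zero hμ
    have hp := left_ne_zero_of_mul h
    have hq := right_ne_zero_of_mul h
    rw [← Finset.HasAntidiagonal.mem_antidiagonal.mp hpq]
    by_cases heq : p = m₁ ∧ q = m₂
    · exact Or.inl (by rw [heq.1, heq.2])
    · exact Or.inr (hr.add_of_eq_or (hF.2 p hp) (hG.2 q hq) heq)

theorem hasLeadingTerm_prod_pow {r : (σ →₀ ℕ) → (σ →₀ ℕ) → Prop} (hr : IsAddStrictOrder r)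
    (f : σ → MvPowerSeries σ R) (hf : ∀ v, HasLeadingTerm r (Finsupp.single v 1) (f v))
    (m : σ →₀ ℕ) : HasLeadingTerm r m (m.prod fun v k => f v ^ k) :=
  Finsupp.prod_pow_induction f (HasLeadingTerm r) (.one r)
    (fun _ _ _ _ => HasLeadingTerm.mul hr) hf m

theorem degree_le_of_coeff_prod_pow_ne_zero (f : σ → MvPowerSeries τ R)
    (hf : ∀ v, constantCoeff (f v) = 0) {m : σ →₀ ℕ} {μ : τ →₀ ℕ}
    (h : coeff μ (m.prod fun v k => f v ^ k) ≠ 0) : m.degree ≤ μ.degree := by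
  have key : ((m.degree : ℕ) : ℕ∞) ≤ (m.prod fun v k => f v ^ k).order := by
    refine Finsupp.prod_pow_induction f (fun m F => ((m.degree : ℕ) : ℕ∞) ≤ F.order)
      (by simp) (fun m₁ m₂ F G h₁ h₂ => ?_) (fun v => ?_) m
    · simpa using (add_le_add h₁ h₂).trans le_order_mul
    · simpa using one_le_order_iff_constCoeff_eq_zero.mpr (hf v)
  exact_mod_cast key.trans (order_le h)

theorem le_of_coeff_X_pow_mul_ne_zero {s : σ} {k : ℕ} {F : MvPowerSeries σ R} {μ : σ →₀ ℕ}
    (h : coeff μ (X s ^ k * F) ≠ 0) : k ≤ μ s := by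
  rw [X_pow_eq, coeff_monomial_mul] at h
  split_ifs at h with hle
  · exact Finsupp.single_le_iff.mp hle
  · exact absurd rfl h

theorem coeff_prod_pow_add_C (g : σ → MvPowerSeries τ R) (c : σ → R) (m : σ →₀ ℕ)
    (μ : τ →₀ ℕ) :
    coeff μ (m.prod fun v k => (g v + C (c v)) ^ k) =
      ∑ᶠ n : σ →₀ ℕ, coeff n (m.prod fun v k => (X v + C (c v)) ^ k : MvPowerSeries σ R) *
        coeff μ (n.prod fun v k => g v ^ k) := by
  set p : MvPolynomial σ R := m.prod fun v k => (MvPolynomial.X v + MvPolynomial.C (c v)) ^ k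
  have hp : (p : MvPowerSeries σ R) = m.prod fun v k => (X v + C (c v)) ^ k := by
    rw [← MvPolynomial.coeToMvPowerSeries.ringHom_apply, map_finsuppProd]
    simp only [map_pow, map_add, MvPolynomial.coeToMvPowerSeries.ringHom_apply,
      MvPolynomial.coe_X, MvPolynomial.coe_C]
  have heval : MvPolynomial.eval₂ C g p = m.prod fun v k => (g v + C (c v)) ^ k := by
    simp only [p, ← MvPolynomial.coe_eval₂Hom, map_finsuppProd, map_pow, map_add,
      MvPolynomial.eval₂Hom_X', MvPolynomial.eval₂Hom_C]
  rw [← hp, ← heval, MvPolynomial.eval₂_eq, map_sum,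
    finsum_eq_finsetSum_of_support_subset (s := p.support)]
  · refine Finset.sum_congr rfl fun n _ => ?_
    rw [coeff_C_mul, MvPolynomial.coeff_coe]
    rfl
  · intro n hn
    rw [Finset.mem_coe, MvPolynomial.mem_support_iff, ← MvPolynomial.coeff_coe]
    exact left_ne_zero_of_mul hn

end MvPowerSeries

section

open MvPowerSeries

variable {N : ℕ}

theorem cf_evalFam (f : Var N → FPS N) (G : FPS N) (μ : Var N →₀ ℕ) :
    cf μ (evalFam f G) = ∑ᶠ m, cf m G * cf μ (prodPow f m) := rfl

theorem evalFam_sub {f : Var N → FPS N} {G H : FPS N}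
    (hG : ∀ μ, (Function.support fun m => cf m G * cf μ (prodPow f m)).Finite)
    (hH : ∀ μ, (Function.support fun m => cf m H * cf μ (prodPow f m)).Finite) :
    evalFam f (G - H) = evalFam f G - evalFam f H := by
  ext μ
  rw [map_sub]
  change cf μ (evalFam f (G - H)) = cf μ (evalFam f G) - cf μ (evalFam f H)
  simp only [cf_evalFam, ← finsum_sub_distrib (hG μ) (hH μ), ← sub_mul]
  rfl

theorem eq_zero_of_evalFam_eq_zero {f : Var N → FPS N} {r : (Var N →₀ ℕ) → (Var N →₀ ℕ) → Prop}
    {G : FPS N} (hf : ∀ m, HasLeadingTerm r m (prodPow f m))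
    (hwf : WellFounded fun m n => r m n ∧ cf m G ≠ 0) (h : evalFam f G = 0) : G = 0 := by
  ext n
  induction n using hwf.induction with
  | _ n ih =>
  have hn : cf n (evalFam f G) = 0 := by rw [h]; rfl
  have hlead : cf n (prodPow f n) = 1 := (hf n).1
  rw [cf_evalFam, finsum_eq_single _ n, hlead, mul_one] at hn
  · rw [map_zero]
    exact hn
  intro m hmn
  by_contra hm
  rcases (hf m).2 n (right_ne_zero_of_mul hm) with rfl | hr
  · exact hmn rfl
  · exact left_ne_zero_of_mul hm (ih m ⟨hr, left_ne_zero_of_mul hm⟩)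

theorem evalFam_add_C (g : Var N → FPS N) (c : Var N → ℂ) (D : FPS N)
    (hfin : ∀ μ, {p : (Var N →₀ ℕ) × (Var N →₀ ℕ) | cf p.1 D ≠ 0 ∧
      cf p.2 (prodPow (fun v => X v + C (c v)) p.1) ≠ 0 ∧ cf μ (prodPow g p.2) ≠ 0}.Finite) :
    evalFam (fun v => g v + C (c v)) D = evalFam g (evalFam (fun v => X v + C (c v)) D) := by
  ext μ
  calc cf μ (evalFam (fun v => g v + C (c v)) D)
      = ∑ᶠ m, ∑ᶠ n, cf m D * (cf n (prodPow (fun v => X v + C (c v)) m) *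
          cf μ (prodPow g n)) := by
        refine finsum_congr fun m => ?_
        rw [← mul_finsum]
        exact congrArg _ (coeff_prod_pow_add_C g c m μ)
    _ = ∑ᶠ n, ∑ᶠ m, cf m D * (cf n (prodPow (fun v => X v + C (c v)) m) *
          cf μ (prodPow g n)) := by
        refine finsum_comm_of_finite _ ((hfin μ).subset fun p hp => ?_)
        have hp : cf p.1 D * (_ * _) ≠ 0 := hp
        exact ⟨left_ne_zero_of_mul hp, left_ne_zero_of_mul (right_ne_zero_of_mul hp),
          right_ne_zero_of_mul (right_ne_zero_of_mul hp)⟩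
    _ = cf μ (evalFam g (evalFam (fun v => X v + C (c v)) D)) := by
        simp only [cf_evalFam, finsum_mul, mul_assoc]

theorem IsDiffPoly.sub {P Q : FPS N} (hP : IsDiffPoly P) (hQ : IsDiffPoly Q) :
    IsDiffPoly (P - Q) := by
  intro k
  refine ((hP k).union (hQ k)).subset ?_
  rintro s ⟨m, hm, hk, rfl⟩
  by_cases hPm : cf m P = 0
  · refine Or.inr ⟨m, fun hQm => hm ?_, hk, rfl⟩
    change coeff m (P - Q) = 0
    rw [map_sub]
    exact (sub_eq_zero.mpr (hPm.trans hQm.symm))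
  · exact Or.inl ⟨m, hPm, hk, rfl⟩

theorem IsDiffPoly.finite_of_bounded {D : FPS N} (hD : IsDiffPoly D) (K : ℕ) :
    {m : Var N →₀ ℕ | cf m D ≠ 0 ∧ m (epsV N) ≤ K ∧ ∀ α, m (Sum.inl (α, 0)) ≤ K}.Finite := by
  let ι : (Var N →₀ ℕ) → (Fin N × ℕ → ℕ) × (Fin N → ℕ) × ℕ :=
    fun m => (posShape m, fun α => m (Sum.inl (α, 0)), m (epsV N))
  have hι : ι.Injective := by
    intro m m' h
    simp only [ι, Prod.mk.injEq] at h
    obtain ⟨h₁, h₂, h₃⟩ := h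
    ext (⟨α, _ | a⟩ | ⟨⟩)
    · exact congrFun h₂ α
    · simpa [posShape] using congrFun h₁ (α, a + 1)
    · exact h₃
  have hshapes : (⋃ k ∈ Set.Iic K,
      {s | ∃ m : Var N →₀ ℕ, cf m D ≠ 0 ∧ m (epsV N) = k ∧ posShape m = s}).Finite :=
    (Set.finite_Iic K).biUnion fun k _ => hD k
  refine ((hshapes.prod ((Set.finite_Iic fun _ => K).prod (Set.finite_Iic K))).preimage
    hι.injOn).subset ?_
  rintro m ⟨hm, hε, h₀⟩
  exact ⟨Set.mem_biUnion (show m (epsV N) ∈ Set.Iic K from hε) ⟨m, hm, rfl, rfl⟩, h₀, hε⟩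

def IsSubscriptOne (v : Var N) : Prop := ∃ α, v = Sum.inl (α, 1)

def subscriptOneDegree (m : Var N →₀ ℕ) : ℕ := ∑ α, m (Sum.inl (α, 1))

def DropsSubscriptOne (m n : Var N →₀ ℕ) : Prop :=
  n < m ∧ ∀ v, ¬ IsSubscriptOne v → n v = m v

theorem isAddStrictOrder_dropsSubscriptOne :
    IsAddStrictOrder (DropsSubscriptOne (N := N)) where
  irrefl _ h := lt_irrefl _ h.1
  trans h₁ h₂ := ⟨h₂.1.trans h₁.1, fun v hv => (h₂.2 v hv).trans (h₁.2 v hv)⟩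
  add_right c h := ⟨add_lt_add_of_lt_of_le h.1 le_rfl, fun v hv => by simp [h.2 v hv]⟩

theorem not_isSubscriptOne_eps : ¬ IsSubscriptOne (epsV N) :=
  fun ⟨_, h⟩ => Sum.inr_ne_inl h

theorem not_isSubscriptOne_inl_zero (α : Fin N) : ¬ IsSubscriptOne (Sum.inl (α, 0) : Var N) :=
  fun ⟨_, h⟩ => by simp at h

theorem le_and_agree_of_eq_or_dropsSubscriptOne {m n : Var N →₀ ℕ}
    (h : n = m ∨ DropsSubscriptOne m n) : n ≤ m ∧ ∀ v, ¬ IsSubscriptOne v → n v = m v := by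
  rcases h with rfl | h
  · exact ⟨le_rfl, fun _ _ => rfl⟩
  · exact ⟨h.1.le, h.2⟩

theorem DropsSubscriptOne.subscriptOneDegree_lt {m n : Var N →₀ ℕ}
    (h : DropsSubscriptOne m n) : subscriptOneDegree n < subscriptOneDegree m := by
  obtain ⟨v, hv⟩ : ∃ v, n v ≠ m v := by
    by_contra! hc
    exact h.1.ne (Finsupp.ext hc)
  obtain ⟨β, rfl⟩ : IsSubscriptOne v := by
    by_contra hv'
    exact hv (h.2 v hv')
  exact Finset.sum_lt_sum (fun α _ => h.1.le _) ⟨β, Finset.mem_univ β, lt_of_le_of_ne (h.1.le _) hv⟩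

theorem IsDiffPoly.wellFounded_dropsSubscriptOne {D : FPS N} (hD : IsDiffPoly D) :
    WellFounded fun m n => DropsSubscriptOne m n ∧ cf m D ≠ 0 := by
  have hbdd : ∀ k, ∃ B, ∀ m, cf m D ≠ 0 → m (epsV N) = k → subscriptOneDegree m ≤ B := by
    intro k
    obtain ⟨B, hB⟩ := ((hD k).image fun s => ∑ α, s (α, 1)).bddAbove
    exact ⟨B, fun m hm hk => hB ⟨posShape m, ⟨m, hm, hk, rfl⟩, by simp [posShape,
      subscriptOneDegree]⟩⟩
  choose B hB using hbdd
  refine Subrelation.wf (fun {m n} h => ?_)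
    (measure fun n => B (n (epsV N)) - subscriptOneDegree n).wf
  obtain ⟨hdrop, hm⟩ := h
  have hle := hB _ m hm rfl
  have hlt := hdrop.subscriptOneDegree_lt
  change B (m (epsV N)) - subscriptOneDegree m < B (n (epsV N)) - subscriptOneDegree n
  rw [hdrop.2 _ not_isSubscriptOne_eps]
  omega

def shiftConst (A : Fin N → ℂ) : Var N → ℂ :=
  Sum.elim (fun p => if p.2 = 1 then A p.1 else 0) 0

def translateFam (A : Fin N → ℂ) : Var N → FPS N := fun v => X v + C (shiftConst A v)

def constFreeFam (A : Fin N → ℂ) (w : Fin N → ℕ → FPS N) : Var N → FPS N :=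
  fun v => substFam w v - C (shiftConst A v)

theorem substFam_eq_constFreeFam_add (A : Fin N → ℂ) (w : Fin N → ℕ → FPS N) :
    substFam w = fun v => constFreeFam A w v + C (shiftConst A v) := by
  ext1 v
  exact (sub_add_cancel _ _).symm

theorem hasLeadingTerm_translateFam (A : Fin N → ℂ) (v : Var N) :
    HasLeadingTerm DropsSubscriptOne (Finsupp.single v 1) (translateFam A v) := by
  refine ⟨by simp [translateFam, coeff_X, coeff_C], fun μ hμ => ?_⟩
  by_cases hv : μ = Finsupp.single v 1
  · exact Or.inl hv
  right
  simp only [translateFam, map_add, coeff_X, coeff_C, if_neg hv, zero_add, ne_eq,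
    ite_eq_right_iff, Classical.not_imp] at hμ
  obtain ⟨rfl, hc⟩ := hμ
  have hv1 : IsSubscriptOne v := by
    rcases v with ⟨α, a⟩ | ⟨⟩
    · by_cases ha : a = 1
      · exact ⟨α, by rw [ha]⟩
      · simp [shiftConst, ha] at hc
    · simp [shiftConst] at hc
  refine ⟨by simp [pos_iff_ne_zero], fun u hu => ?_⟩
  rw [Finsupp.single_apply, if_neg (by rintro rfl; exact hu hv1)]
  rfl

def epsLexKey (m : Var N →₀ ℕ) : ℕ ×ₗ ℕ := toLex (m (epsV N), tweight m)

theorem tweight_add (m₁ m₂ : Var N →₀ ℕ) : tweight (m₁ + m₂) = tweight m₁ + tweight m₂ :=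
  Finsupp.sum_add_index' (fun v => by rcases v with ⟨_, _⟩ | _ <;> rfl)
    (fun v _ _ => by rcases v with ⟨_, _⟩ | _ <;> simp [Nat.mul_add])

theorem tweight_single (α : Fin N) (n : ℕ) :
    tweight (Finsupp.single (Sum.inl (α, n) : Var N) 1) = n := by
  simp [tweight, Finsupp.sum_single_index]

theorem epsLexKey_add (m₁ m₂ : Var N →₀ ℕ) :
    epsLexKey (m₁ + m₂) = epsLexKey m₁ + epsLexKey m₂ := by
  simp only [epsLexKey, Finsupp.add_apply, tweight_add]
  rfl

theorem isAddStrictOrder_epsLexKey :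
    IsAddStrictOrder (InvImage (· < ·) (epsLexKey (N := N))) where
  irrefl _ := lt_irrefl _
  trans := lt_trans
  add_right c h := by
    simpa only [InvImage, epsLexKey_add] using add_lt_add_of_lt_of_le h le_rfl

theorem NormalForm.hasLeadingTerm_constFreeFam {A : Fin N → ℂ} {w : Fin N → ℕ → FPS N}
    (hw : NormalForm A w) (v : Var N) :
    HasLeadingTerm (InvImage (· < ·) epsLexKey) (Finsupp.single v 1) (constFreeFam A w v) := by
  rcases v with ⟨α, n⟩ | ⟨⟩
  · obtain ⟨R, S, hR, hwn⟩ := hw α n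
    have hred :
        constFreeFam A w (Sum.inl (α, n)) = X (Sum.inl (α, n)) + R + X (epsV N) ^ 2 * S := by
      simp only [constFreeFam, substFam, hwn, shiftConst, Sum.elim_inl]
      ring
    have hkey : epsLexKey (Finsupp.single (Sum.inl (α, n)) 1 : Var N →₀ ℕ) = toLex (0, n) := by
      simp [epsLexKey, tweight_single]
    have hR_above : ∀ μ, cf μ R ≠ 0 → toLex (0, n) < epsLexKey μ := fun μ hμ =>
      Prod.Lex.toLex_lt_toLex.mpr (Or.inr ⟨(hR μ hμ).1.symm, (hR μ hμ).2⟩)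
    have hS_above : ∀ μ, coeff μ (X (epsV N) ^ 2 * S) ≠ 0 → toLex (0, n) < epsLexKey μ :=
      fun μ hμ => Prod.Lex.toLex_lt_toLex.mpr
        (Or.inl (lt_of_lt_of_le two_pos (le_of_coeff_X_pow_mul_ne_zero hμ)))
    rw [hred]
    constructor
    · have hR0 : coeff (Finsupp.single (Sum.inl (α, n)) 1) R = 0 := by
        by_contra h
        simpa [hkey] using hR_above _ h
      have hS0 : coeff (Finsupp.single (Sum.inl (α, n)) 1) (X (epsV N) ^ 2 * S) = 0 := by
        by_contra h
        simpa [hkey] using hS_above _ h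
      simp [coeff_X, hR0, hS0]
    · intro μ hμ
      by_cases hX : μ = Finsupp.single (Sum.inl (α, n)) 1
      · exact Or.inl hX
      right
      simp only [map_add, coeff_X, if_neg hX, zero_add] at hμ
      change epsLexKey _ < epsLexKey μ
      rw [hkey]
      by_cases hRμ : coeff μ R = 0
      · exact hS_above μ (by simpa [hRμ] using hμ)
      · exact hR_above μ hRμ
  · have hred : constFreeFam A w (Sum.inr ()) = X (epsV N) := by
      simp [constFreeFam, substFam, shiftConst]
    refine ⟨by simp [hred, coeff_X], fun μ hμ => Or.inl ?_⟩
    by_contra h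
    simp [hred, coeff_X, h] at hμ

theorem NormalForm.constantCoeff_constFreeFam {A : Fin N → ℂ} {w : Fin N → ℕ → FPS N}
    (hw : NormalForm A w) (v : Var N) : constantCoeff (constFreeFam A w v) = 0 := by
  by_contra h
  rcases (hw.hasLeadingTerm_constFreeFam v).2 0 h with h0 | hlt
  · exact Finsupp.single_ne_zero.mpr one_ne_zero h0.symm
  · change epsLexKey _ < epsLexKey 0 at hlt
    simp [epsLexKey, Prod.Lex.toLex_lt_toLex, tweight] at hlt

theorem NormalForm.finite_expansion {A : Fin N → ℂ} {w : Fin N → ℕ → FPS N}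
    (hw : NormalForm A w) {D : FPS N} (hD : IsDiffPoly D) (μ : Var N →₀ ℕ) :
    {p : (Var N →₀ ℕ) × (Var N →₀ ℕ) | cf p.1 D ≠ 0 ∧ cf p.2 (prodPow (translateFam A) p.1) ≠ 0 ∧
      cf μ (prodPow (constFreeFam A w) p.2) ≠ 0}.Finite := by
  refine ((hD.finite_of_bounded μ.degree).biUnion fun m _ =>
    (Set.finite_singleton m).prod (Set.finite_Iic m)).subset ?_
  rintro ⟨m, n⟩ ⟨hm, hmn, hnμ⟩
  obtain ⟨hle, hagree⟩ := le_and_agree_of_eq_or_dropsSubscriptOne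
    ((hasLeadingTerm_prod_pow isAddStrictOrder_dropsSubscriptOne _
      (hasLeadingTerm_translateFam A) m).2 n hmn)
  have hdeg : n.degree ≤ μ.degree :=
    degree_le_of_coeff_prod_pow_ne_zero _ hw.constantCoeff_constFreeFam hnμ
  refine Set.mem_biUnion (x := m) ⟨hm, ?_, fun α => ?_⟩ ⟨rfl, hle⟩
  · rw [← hagree _ not_isSubscriptOne_eps]
    exact (Finsupp.le_degree _ _).trans hdeg
  · rw [← hagree _ (not_isSubscriptOne_inl_zero α)]
    exact (Finsupp.le_degree _ _).trans hdeg

theorem NormalForm.evalFam_substFam {A : Fin N → ℂ} {w : Fin N → ℕ → FPS N}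
    (hw : NormalForm A w) {D : FPS N} (hD : IsDiffPoly D) :
    evalFam (substFam w) D = evalFam (constFreeFam A w) (evalFam (translateFam A) D) := by
  rw [substFam_eq_constFreeFam_add A w]
  exact evalFam_add_C _ _ D (hw.finite_expansion hD)

theorem NormalForm.finite_support_substFam {A : Fin N → ℂ} {w : Fin N → ℕ → FPS N}
    (hw : NormalForm A w) {D : FPS N} (hD : IsDiffPoly D) (μ : Var N →₀ ℕ) :
    (Function.support fun m => cf m D * cf μ (prodPow (substFam w) m)).Finite := by
  refine ((hw.finite_expansion hD μ).image Prod.fst).subset fun m hm => ?_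
  have hm : cf m D * cf μ (prodPow (substFam w) m) ≠ 0 := hm
  have hexp : cf μ (prodPow (substFam w) m) ≠ 0 := right_ne_zero_of_mul hm
  rw [substFam_eq_constFreeFam_add A w] at hexp
  change coeff μ (m.prod fun v k => (constFreeFam A w v + C (shiftConst A v)) ^ k) ≠ 0 at hexp
  rw [coeff_prod_pow_add_C] at hexp
  obtain ⟨n, hn⟩ : ∃ n, cf n (prodPow (translateFam A) m) *
      cf μ (prodPow (constFreeFam A w) n) ≠ 0 := by
    by_contra! h
    exact hexp (finsum_eq_zero_of_forall_eq_zero h)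
  exact ⟨(m, n), ⟨left_ne_zero_of_mul hm, left_ne_zero_of_mul hn, right_ne_zero_of_mul hn⟩, rfl⟩

theorem NormalForm.eq_zero_of_evalFam_constFreeFam_eq_zero {A : Fin N → ℂ}
    {w : Fin N → ℕ → FPS N} (hw : NormalForm A w) {G : FPS N}
    (h : evalFam (constFreeFam A w) G = 0) : G = 0 :=
  eq_zero_of_evalFam_eq_zero
    (hasLeadingTerm_prod_pow isAddStrictOrder_epsLexKey _ hw.hasLeadingTerm_constFreeFam)
    (Subrelation.wf (fun h => h.1) (InvImage.wf epsLexKey wellFounded_lt)) h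

theorem IsDiffPoly.eq_zero_of_evalFam_translateFam_eq_zero {D : FPS N} (hD : IsDiffPoly D)
    (A : Fin N → ℂ) (h : evalFam (translateFam A) D = 0) : D = 0 :=
  eq_zero_of_evalFam_eq_zero
    (hasLeadingTerm_prod_pow isAddStrictOrder_dropsSubscriptOne _ (hasLeadingTerm_translateFam A))
    hD.wellFounded_dropsSubscriptOne h

end

theorem statement1_general (N : ℕ) (A : Fin N → ℂ)
    (w : Fin N → ℕ → FPS N) (hw : NormalForm A w)
    (P Q : FPS N) (hP : IsDiffPoly P) (hQ : IsDiffPoly Q)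
    (h : evalFam (substFam w) P = evalFam (substFam w) Q) : P = Q := by
  have hD : IsDiffPoly (P - Q) := hP.sub hQ
  have hsubst : evalFam (substFam w) (P - Q) = 0 := by
    rw [evalFam_sub (hw.finite_support_substFam hP) (hw.finite_support_substFam hQ), h, sub_self]
  rw [hw.evalFam_substFam hD] at hsubst
  exact sub_eq_zero.mp <| hD.eq_zero_of_evalFam_translateFam_eq_zero A <|
    hw.eq_zero_of_evalFam_constFreeFam_eq_zero hsubst

/-- If the family `w̃^α_n` is in normal form and `P, Q ∈ 𝒜̂_w` are
differential polynomials with `P|_{w^α_a = w̃^α_a} = Q|_{w^α_a = w̃^α_a}`, then `P = Q`. -/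
theorem statement1 (N : ℕ) (hN : 1 ≤ N) (A : Fin N → ℂ)
    (w : Fin N → ℕ → FPS N) (hw : NormalForm A w)
    (P Q : FPS N) (hP : IsDiffPoly P) (hQ : IsDiffPoly Q)
    (h : evalFam (substFam w) P = evalFam (substFam w) Q) : P = Q :=
  statement1_general N A w hw P Q hP hQ h
end
end

section
/- Let T be a finite rooted tree with vertex set V(T) and edge set E(T). For an integer k ≥ 1, call a function l : V(T) → {1,…,k} a surjective level function of degree k if l takes the value 1 at the root, l(v) < l(w) whenever w is a child of v, and l is surjective onto {1,…,k}. Then Σ_{k≥1} Σ_l (−1)^{k−1} = (−1)^{|E(T)|}, where the inner sum runs over all surjective level functions of degree k (the total sum is finite since necessarily k ≤ |V(T)|, and |E(T)| = |V(T)| − 1). -/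
/-!
Call `f(s) = ∑ₖ (-1)^k · #{level functions of degree k on s}`. The vertices of level `1` form
a nonempty set `B` of minimal elements, and lowering all other levels by one is a bijection onto
the level functions of degree `k` on `s \ B`. Hence `f(s) = -∑_{∅ ≠ B ⊆ min s} f(s \ B)`, and
since `∑_{∅ ≠ B ⊆ M} (-1)^|B| = -1` for `M ≠ ∅`, induction on `|s|` gives `f(s) = (-1)^|s|`.
For a rooted tree the root is forced to level `1`, and `|V| = |E| + 1`.
-/

open scoped Classical
open Finset

lemma sum_erase_empty_neg_one_pow_card_sdiff {α : Type*} [DecidableEq α] {s M : Finset α}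
    (hMs : M ⊆ s) (hM : M.Nonempty) :
    ∑ B ∈ M.powerset.erase ∅, (-1 : ℤ) ^ #(s \ B) = -(-1) ^ #s := by
  have hsign : ∀ B ∈ M.powerset, (-1 : ℤ) ^ #(s \ B) = (-1) ^ #s * (-1) ^ #B := fun B hB => by
    rw [← card_sdiff_add_card_eq_card ((mem_powerset.1 hB).trans hMs), pow_add, mul_assoc,
      ← pow_add, Even.neg_one_pow ⟨_, rfl⟩, mul_one]
  rw [sum_erase_eq_sub (empty_mem_powerset M), sum_congr rfl hsign, ← mul_sum,
    sum_powerset_neg_one_pow_card_of_nonempty hM]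
  simp

lemma SimpleGraph.Connected.exists_adj_dist_eq_add_one {V : Type*} {G : SimpleGraph V}
    (hG : G.Connected) {u v : V} (hvu : v ≠ u) :
    ∃ w, G.Adj w v ∧ G.dist u v = G.dist u w + 1 := by
  obtain ⟨p, hp⟩ := (hG.preconnected v u).exists_walk_length_eq_dist
  cases p with
  | nil => exact absurd rfl hvu
  | @cons _ w _ hvw q =>
    refine ⟨w, hvw.symm, ?_⟩
    have hq := SimpleGraph.dist_le q
    rw [SimpleGraph.Walk.length_cons] at hp
    rw [SimpleGraph.dist_comm] at hp hq
    rcases hvw.symm.diff_dist_adj (u := u) with h | h | h <;> omega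

section LevelFun

variable {V : Type*} (r : V → V → Prop)

/-- `r v w` means that `w` is a child of `v`. A level function on `s` is a function on all of `V`
vanishing off `s`, so that level functions on different subsets live in one type. -/
def IsLevelFun (s : Finset V) (k : ℕ) (l : V → ℕ) : Prop :=
  (∀ v ∉ s, l v = 0) ∧ (∀ v ∈ s, 1 ≤ l v ∧ l v ≤ k) ∧
    (∀ v ∈ s, ∀ w ∈ s, r v w → l v < l w) ∧ ∀ i, 1 ≤ i → i ≤ k → ∃ v ∈ s, l v = i

noncomputable def minimalElems (s : Finset V) : Finset V :=
  {v ∈ s | ∀ u ∈ s, ¬ r u v}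

variable {r} {s B : Finset V} {k : ℕ} {l : V → ℕ}

lemma minimalElems_subset : minimalElems r s ⊆ s := filter_subset _ _

lemma minimalElems_nonempty (hr : WellFounded r) (hs : s.Nonempty) :
    (minimalElems r s).Nonempty :=
  let ⟨v, hv, hmin⟩ := hr.has_min s hs
  ⟨v, mem_filter.2 ⟨hv, hmin⟩⟩

variable [DecidableEq V]

lemma IsLevelFun.filter_eq_one_mem (hl : IsLevelFun r s (k + 1) l) :
    {v ∈ s | l v = 1} ∈ (minimalElems r s).powerset.erase ∅ := by
  obtain ⟨-, hbd, hmono, hsurj⟩ := hl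
  obtain ⟨v, hv, hv1⟩ := hsurj 1 le_rfl (by omega)
  refine mem_erase.2
    ⟨ne_empty_of_mem (mem_filter.2 ⟨hv, hv1⟩), mem_powerset.2 fun w hw => ?_⟩
  obtain ⟨hw, hw1⟩ := mem_filter.1 hw
  refine mem_filter.2 ⟨hw, fun u hu huw => ?_⟩
  have := hmono u hu w hw huw
  have := (hbd u hu).1
  omega

lemma IsLevelFun.tsub_one (hl : IsLevelFun r s (k + 1) l) :
    IsLevelFun r (s \ {v ∈ s | l v = 1}) k (fun v => l v - 1) := by
  obtain ⟨hzero, hbd, hmono, hsurj⟩ := hl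
  simp only [IsLevelFun, mem_sdiff, mem_filter, not_and]
  refine ⟨fun v hv => ?_, fun v hv => ?_, fun v hv w hw hvw => ?_, fun i hi hik => ?_⟩
  · by_cases hvs : v ∈ s
    · have := (hbd v hvs).1
      have := hv hvs
      omega
    · simp [hzero v hvs]
  · have := hbd v hv.1
    have := hv.2 hv.1
    omega
  · have := hmono v hv.1 w hw.1 hvw
    have := (hbd v hv.1).1
    have := hv.2 hv.1
    omega
  · obtain ⟨v, hv, hvi⟩ := hsurj (i + 1) (by omega) (by omega)
    exact ⟨v, ⟨hv, fun _ => by omega⟩, by omega⟩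

lemma IsLevelFun.piecewise_add_one (hB : B ∈ (minimalElems r s).powerset.erase ∅)
    (hl : IsLevelFun r (s \ B) k l) : IsLevelFun r s (k + 1) (s.piecewise (l + 1) 0) := by
  obtain ⟨hBne, hBmin⟩ := mem_erase.1 hB
  have hBs : B ⊆ s := (mem_powerset.1 hBmin).trans minimalElems_subset
  obtain ⟨hzero, hbd, hmono, hsurj⟩ := hl
  refine ⟨fun v hv => piecewise_eq_of_notMem _ _ _ hv, fun v hv => ?_, fun v hv w hw hvw => ?_,
    fun i hi hik => ?_⟩
  · simp only [piecewise_eq_of_mem _ _ _ hv, Pi.add_apply, Pi.one_apply]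
    by_cases hvB : v ∈ B
    · rw [hzero v (fun h => (mem_sdiff.1 h).2 hvB)]
      omega
    · have := hbd v (mem_sdiff.2 ⟨hv, hvB⟩)
      omega
  · simp only [piecewise_eq_of_mem _ _ _ hv, piecewise_eq_of_mem _ _ _ hw, Pi.add_apply,
      Pi.one_apply, add_lt_add_iff_right]
    have hwB : w ∉ B := fun hwB => (mem_filter.1 (mem_powerset.1 hBmin hwB)).2 v hv hvw
    by_cases hvB : v ∈ B
    · rw [hzero v (fun h => (mem_sdiff.1 h).2 hvB)]
      exact (hbd w (mem_sdiff.2 ⟨hw, hwB⟩)).1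
    · exact hmono v (mem_sdiff.2 ⟨hv, hvB⟩) w (mem_sdiff.2 ⟨hw, hwB⟩) hvw
  · obtain ⟨v, hv⟩ := nonempty_iff_ne_empty.2 hBne
    rcases eq_or_ne i 1 with rfl | hi1
    · refine ⟨v, hBs hv, ?_⟩
      simp [piecewise_eq_of_mem _ _ _ (hBs hv), hzero v (fun h => (mem_sdiff.1 h).2 hv)]
    · obtain ⟨w, hw, hwi⟩ := hsurj (i - 1) (by omega) (by omega)
      refine ⟨w, (mem_sdiff.1 hw).1, ?_⟩
      simp only [piecewise_eq_of_mem _ _ _ (mem_sdiff.1 hw).1, Pi.add_apply, Pi.one_apply,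
        hwi]
      omega

lemma IsLevelFun.filter_piecewise_add_one (hBs : B ⊆ s) (hl : IsLevelFun r (s \ B) k l) :
    {v ∈ s | s.piecewise (l + 1) (0 : V → ℕ) v = 1} = B := by
  ext v
  simp only [mem_filter]
  constructor
  · rintro ⟨hv, hv1⟩
    by_contra hvB
    have := (hl.2.1 v (mem_sdiff.2 ⟨hv, hvB⟩)).1
    simp only [piecewise_eq_of_mem _ _ _ hv, Pi.add_apply, Pi.one_apply] at hv1
    omega
  · intro hvB
    refine ⟨hBs hvB, ?_⟩
    simp [piecewise_eq_of_mem _ _ _ (hBs hvB), hl.1 v (fun h => (mem_sdiff.1 h).2 hvB)]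

variable [Fintype V]

variable (r) in
noncomputable def levelFuns (s : Finset V) (k : ℕ) : Finset (V → ℕ) :=
  {l ∈ Fintype.piFinset fun _ => range (k + 1) | IsLevelFun r s k l}

lemma mem_levelFuns : l ∈ levelFuns r s k ↔ IsLevelFun r s k l := by
  simp only [levelFuns, mem_filter, Fintype.mem_piFinset, mem_range, and_iff_right_iff_imp]
  intro hl v
  by_cases hv : v ∈ s
  · have := (hl.2.1 v hv).2
    omega
  · rw [hl.1 v hv]
    omega

lemma levelFuns_empty_zero : levelFuns r ∅ 0 = {0} := by
  ext l
  rw [mem_levelFuns, mem_singleton]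
  refine ⟨fun hl => funext fun v => hl.1 v (notMem_empty v), ?_⟩
  rintro rfl
  exact ⟨fun _ _ => rfl, by simp, by simp, fun i hi hi0 => by omega⟩

lemma levelFuns_zero (hs : s.Nonempty) : levelFuns r s 0 = ∅ := by
  obtain ⟨v, hv⟩ := hs
  ext l
  simp only [mem_levelFuns, notMem_empty, iff_false]
  exact fun hl => by have := hl.2.1 v hv; omega

theorem card_levelFuns_succ (s : Finset V) (k : ℕ) :
    #(levelFuns r s (k + 1)) =
      ∑ B ∈ (minimalElems r s).powerset.erase ∅, #(levelFuns r (s \ B) k) := by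
  rw [card_eq_sum_card_fiberwise fun l hl => (mem_levelFuns.1 hl).filter_eq_one_mem]
  refine sum_congr rfl fun B hB => card_nbij' (fun l v => l v - 1)
    (fun l => s.piecewise (l + 1) (0 : V → ℕ)) ?_ ?_ ?_ ?_
  · intro l hlB
    obtain ⟨hl, rfl⟩ := mem_filter.1 (mem_coe.1 hlB)
    exact mem_levelFuns.2 (mem_levelFuns.1 hl).tsub_one
  · intro l hl
    have hBs : B ⊆ s := (mem_powerset.1 (mem_of_mem_erase hB)).trans minimalElems_subset
    have hl := mem_levelFuns.1 (mem_coe.1 hl)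
    exact mem_filter.2
      ⟨mem_levelFuns.2 (hl.piecewise_add_one hB), hl.filter_piecewise_add_one hBs⟩
  · intro l hlB
    obtain ⟨hzero, hbd, -⟩ := mem_levelFuns.1 (mem_filter.1 (mem_coe.1 hlB)).1
    funext v
    by_cases hv : v ∈ s
    · have := (hbd v hv).1
      simp only [piecewise_eq_of_mem _ _ _ hv, Pi.add_apply, Pi.one_apply]
      omega
    · simp [piecewise_eq_of_notMem _ _ _ hv, hzero v hv]
  · intro l hl
    have hzero := (mem_levelFuns.1 (mem_coe.1 hl)).1
    funext v
    by_cases hv : v ∈ s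
    · simp [piecewise_eq_of_mem _ _ _ hv]
    · simp [piecewise_eq_of_notMem _ _ _ hv, hzero v fun h => hv (mem_sdiff.1 h).1]

theorem alternating_sum_card_levelFuns (hr : WellFounded r) (n : ℕ) :
    ∀ s : Finset V, #s ≤ n →
      ∑ k ∈ range (n + 1), (-1 : ℤ) ^ k * #(levelFuns r s k) = (-1) ^ #s := by
  induction n with
  | zero =>
    intro s hs
    rw [card_eq_zero.1 (Nat.le_zero.1 hs)]
    simp [levelFuns_empty_zero]
  | succ n ih =>
    intro s hs
    have hrec : ∀ k ∈ range (n + 1), (-1 : ℤ) ^ (k + 1) * #(levelFuns r s (k + 1)) =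
        ∑ B ∈ (minimalElems r s).powerset.erase ∅,
          -((-1 : ℤ) ^ k * #(levelFuns r (s \ B) k)) := by
      intro k _
      rw [card_levelFuns_succ, Nat.cast_sum, mul_sum]
      exact sum_congr rfl fun _ _ => by ring
    rw [sum_range_succ', sum_congr rfl hrec, sum_comm]
    rcases s.eq_empty_or_nonempty with rfl | hs
    · simp [levelFuns_empty_zero, minimalElems]
    · have hIH : ∀ B ∈ (minimalElems r s).powerset.erase ∅,
          ∑ k ∈ range (n + 1), -((-1 : ℤ) ^ k * #(levelFuns r (s \ B) k)) =
            -(-1) ^ #(s \ B) := by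
        intro B hB
        obtain ⟨hBne, hBmin⟩ := mem_erase.1 hB
        have hBs : B ⊆ s := (mem_powerset.1 hBmin).trans minimalElems_subset
        rw [sum_neg_distrib, ih]
        have := card_lt_card (sdiff_ssubset hBs (nonempty_iff_ne_empty.2 hBne))
        omega
      rw [sum_congr rfl hIH, sum_neg_distrib, sum_erase_empty_neg_one_pow_card_sdiff
        minimalElems_subset (minimalElems_nonempty hr hs), levelFuns_zero hs]
      simp

lemma coe_levelFuns_univ {root : V} (hroot : ∀ v ≠ root, ∃ u, r u v) (hk : 1 ≤ k) :
    (levelFuns r univ k : Set (V → ℕ)) =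
      {l | l root = 1 ∧ (∀ v w, r v w → l v < l w) ∧ (∀ v, 1 ≤ l v ∧ l v ≤ k) ∧
        ∀ i, 1 ≤ i → i ≤ k → ∃ v, l v = i} := by
  ext l
  simp only [mem_coe, mem_levelFuns, IsLevelFun, mem_univ, not_true_eq_false, false_imp_iff,
    implies_true, true_and, forall_const, Set.mem_ofPred_eq]
  refine ⟨fun ⟨hbd, hmono, hsurj⟩ => ⟨?_, hmono, hbd, hsurj⟩,
    fun ⟨_, hmono, hbd, hsurj⟩ => ⟨hbd, hmono, hsurj⟩⟩
  obtain ⟨v, hv1⟩ := hsurj 1 le_rfl hk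
  rcases eq_or_ne v root with rfl | hv
  · exact hv1
  · obtain ⟨u, hu⟩ := hroot v hv
    have := hmono u v hu
    have := (hbd u).1
    omega

end LevelFun

theorem statement8_general (V : Type) [Fintype V]
    (G : SimpleGraph V) [DecidableRel G.Adj] (hT : G.IsTree) (root : V) :
    ∑ k ∈ Finset.Icc 1 (Fintype.card V), (-1 : ℤ) ^ (k - 1) *
        ({l : V → ℕ |
            l root = 1 ∧
            (∀ v w : V, G.Adj v w → G.dist root w = G.dist root v + 1 → l v < l w) ∧
            (∀ v : V, 1 ≤ l v ∧ l v ≤ k) ∧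
            (∀ i : ℕ, 1 ≤ i → i ≤ k → ∃ v : V, l v = i)}.ncard : ℤ)
      = (-1) ^ G.edgeFinset.card := by
  set C : V → V → Prop := fun v w => G.Adj v w ∧ G.dist root w = G.dist root v + 1
  have hC : WellFounded C :=
    Subrelation.wf (fun {v w} (h : C v w) => show G.dist root v < G.dist root w from
      h.2 ▸ Nat.lt_add_one _) (InvImage.wf (G.dist root) wellFounded_lt)
  have hroot : ∀ v ≠ root, ∃ u, C u v := fun v hv =>
    hT.connected.exists_adj_dist_eq_add_one hv
  have hsum := alternating_sum_card_levelFuns hC (Fintype.card V) univ card_univ.le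
  rw [Nat.range_succ_eq_Icc_zero, Icc_eq_cons_Ioc (Nat.zero_le _), sum_cons,
    levelFuns_zero ⟨root, mem_univ _⟩, card_empty, Nat.cast_zero, mul_zero, zero_add,
    ← Icc_add_one_left_eq_Ioc, zero_add, card_univ] at hsum
  calc _ = ∑ k ∈ Icc 1 (Fintype.card V), (-1 : ℤ) ^ (k - 1) * #(levelFuns C univ k) :=
        sum_congr rfl fun k hk => by
          rw [← Set.ncard_coe_finset, coe_levelFuns_univ hroot (mem_Icc.1 hk).1]
          simp only [C, and_imp]
    _ = -∑ k ∈ Icc 1 (Fintype.card V), (-1 : ℤ) ^ k * #(levelFuns C univ k) := by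
        rw [← sum_neg_distrib]
        refine sum_congr rfl fun k hk => ?_
        obtain ⟨j, rfl⟩ := Nat.exists_eq_add_of_le' (mem_Icc.1 hk).1
        simp [pow_succ]
    _ = (-1) ^ #G.edgeFinset := by
        rw [hsum, ← hT.card_edgeFinset, pow_succ]
        ring

/-- Let `T` be a finite rooted tree. For `k ≥ 1`, a surjective level
function of degree `k` is a function `l : V → {1,…,k}` with `l(root) = 1`, `l(v) < l(w)`
whenever `w` is a child of `v` (i.e. `w` is adjacent to `v` and lies one step further from
the root), and `l` surjective onto `{1,…,k}`. Then
`Σ_{k ≥ 1} Σ_l (−1)^{k−1} = (−1)^{|E(T)|}` (the sum is finite since `k ≤ |V|`). -/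
theorem statement8 (V : Type) [Fintype V] [DecidableEq V]
    (G : SimpleGraph V) [DecidableRel G.Adj] (hT : G.IsTree) (root : V) :
    ∑ k ∈ Finset.Icc 1 (Fintype.card V), (-1 : ℤ) ^ (k - 1) *
        ({l : V → ℕ |
            l root = 1 ∧
            (∀ v w : V, G.Adj v w → G.dist root w = G.dist root v + 1 → l v < l w) ∧
            (∀ v : V, 1 ≤ l v ∧ l v ≤ k) ∧
            (∀ i : ℕ, 1 ≤ i → i ≤ k → ∃ v : V, l v = i)}.ncard : ℤ)
      = (-1) ^ G.edgeFinset.card :=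
  statement8_general V G hT root
end

section
/- For every g ≥ 0, n ≥ 1 and m ≥ 0, the set SRT^{(b,c,a)}_{g,n,m;∘} of isomorphism classes of admissible complete balanced stable rooted trees of genus g with n regular legs, m frozen legs, and an arbitrary finite number of extra legs, is finite. -/
open scoped Classical

noncomputable section

/-- A combinatorial encoding of a stable rooted tree with `n` labelled regular legs,
`m` frozen legs attached to the root, a genus attached to every vertex, and a number of
unlabelled extra legs attached to every vertex.  The vertices are `0, …, k−1`; the root is
the vertex `0`, and every non-root vertex `i` has a mother `parent i` with a smaller index
(so the underlying graph is a tree rooted at `0`). -/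
structure SRTree (n m : ℕ) where
  /-- number of vertices -/
  k : ℕ
  kpos : 0 < k
  /-- the mother of each vertex (the root is a fixed point) -/
  parent : Fin k → Fin k
  parent_lt : ∀ i : Fin k, 0 < (i : ℕ) → (parent i : ℕ) < (i : ℕ)
  parent_root : ∀ i : Fin k, (i : ℕ) = 0 → parent i = i
  /-- the genus of each vertex -/
  genus : Fin k → ℕ
  /-- the vertex to which each regular leg is attached -/
  rleg : Fin n → Fin k
  /-- the number of extra legs attached to each vertex -/
  eleg : Fin k → ℕ

namespace SRTree

variable {n m : ℕ}

/-- The root. -/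
def root (T : SRTree n m) : Fin T.k := ⟨0, T.kpos⟩

/-- The canonical level function: the root has level 1, and each vertex has level one more
than its mother. -/
def level (T : SRTree n m) (v : Fin T.k) : ℕ :=
  if h : (v : ℕ) = 0 then 1 else level T (T.parent v) + 1
termination_by (v : ℕ)
decreasing_by exact T.parent_lt v (Nat.pos_of_ne_zero h)

/-- The degree of the tree: the maximal level of a vertex. -/
def deg (T : SRTree n m) : ℕ := Finset.univ.sup (T.level)

/-- Number of direct descendants (children) of a vertex. -/
def nChild (T : SRTree n m) (v : Fin T.k) : ℕ :=
  (Finset.univ.filter fun w : Fin T.k => (w : ℕ) ≠ 0 ∧ T.parent w = v).card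

/-- Number of regular legs attached to a vertex. -/
def nRleg (T : SRTree n m) (v : Fin T.k) : ℕ :=
  (Finset.univ.filter fun j : Fin n => T.rleg j = v).card

/-- The number `n(v)` of half-edges incident to `v`, not counting extra legs: edges to the
children, the edge to the mother (for a non-root vertex), the regular legs, and the `m`
frozen legs (at the root). -/
def valNE (T : SRTree n m) (v : Fin T.k) : ℕ :=
  T.nChild v + (if (v : ℕ) = 0 then m else 1) + T.nRleg v

/-- Stability: `2 g(v) − 2 + n(v) > 0` at every vertex, counting all incident half-edges
(including the extra legs). -/
def Stable (T : SRTree n m) : Prop :=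
  ∀ v : Fin T.k, 2 < 2 * T.genus v + (T.valNE v + T.eleg v)

/-- The total genus of the tree is `g`. -/
def TotalGenus (T : SRTree n m) (g : ℕ) : Prop :=
  (∑ v : Fin T.k, T.genus v) = g

/-- A vertex is potentially unstable if it violates stability after the extra legs are
forgotten. -/
def PU (T : SRTree n m) (v : Fin T.k) : Prop :=
  2 * T.genus v + T.valNE v ≤ 2

/-- Balanced: no extra legs at the root, and at least one extra leg at every other
vertex. -/
def Balanced (T : SRTree n m) : Prop :=
  T.eleg T.root = 0 ∧ ∀ v : Fin T.k, (v : ℕ) ≠ 0 → 1 ≤ T.eleg v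

/-- `w` is a descendant of `v` (possibly `w = v`). -/
def Desc (T : SRTree n m) (v w : Fin T.k) : Prop :=
  ∃ j : ℕ, T.parent^[j] w = v

/-- Completeness of a balanced tree: (a) every vertex has a descendant of level `deg T`;
(b) every regular leg is attached at level `deg T`; (c) every vertex of level `deg T`
carries a regular leg; (d) every level contains a vertex that is not potentially
unstable. -/
def Complete (T : SRTree n m) : Prop :=
  (∀ v : Fin T.k, ∃ w : Fin T.k, T.Desc v w ∧ T.level w = T.deg) ∧
  (∀ j : Fin n, T.level (T.rleg j) = T.deg) ∧
  (∀ v : Fin T.k, T.level v = T.deg → ∃ j : Fin n, T.rleg j = v) ∧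
  (∀ K : ℕ, 1 ≤ K → K ≤ T.deg → ∃ v : Fin T.k, T.level v = K ∧ ¬ T.PU v)

/-- Admissibility: for every `1 ≤ K < deg T`,
`Σ_{h ∈ H^e_+(T), l_T(h) = K} q(h) ≤ 2 g_K(T) − 2 + m`.  The half-edges `h ∈ H^e_+(T)` of
level `K` correspond to the non-root vertices `w` of level `K + 1` (the half-edge being
attached to the mother of `w`), and `q(h) = eleg w − 1`. -/
def Admissible (T : SRTree n m) : Prop :=
  ∀ K : ℕ, 1 ≤ K → K < T.deg →
    (∑ w ∈ Finset.univ.filter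
        (fun w : Fin T.k => (w : ℕ) ≠ 0 ∧ T.level w = K + 1), ((T.eleg w : ℤ) - 1))
      ≤ 2 * (∑ v ∈ Finset.univ.filter (fun v : Fin T.k => T.level v ≤ K),
          (T.genus v : ℤ)) - 2 + (m : ℤ)

/-- Isomorphism of encoded stable rooted trees: a bijection of the vertices preserving the
root, the mother map, the genera, the extra-leg counts, and the attachment of the labelled
regular legs. -/
def Iso (T₁ T₂ : SRTree n m) : Prop :=
  ∃ e : Fin T₁.k ≃ Fin T₂.k,
    e T₁.root = T₂.root ∧
    (∀ v, T₂.parent (e v) = e (T₁.parent v)) ∧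
    (∀ v, T₂.genus (e v) = T₁.genus v) ∧
    (∀ v, T₂.eleg (e v) = T₁.eleg v) ∧
    (∀ j : Fin n, T₂.rleg j = e (T₁.rleg j))

end SRTree

/-
The four defining conditions bound every piece of data of an admissible complete balanced
tree. Each vertex is the ancestor, at its own level, of a top-level vertex carrying a regular
leg, so there are at most `deg T * n` vertices. Every level contains a vertex that is not
potentially unstable, and such a vertex has positive genus, carries a regular leg, has at least
two children or is the root; there are at most `g`, `n`, `n` and `1` of those, because the
leaves all lie at the top level and carry distinct regular legs. Genera are bounded by `g`, and
admissibility bounds the number of extra legs at a single vertex by `2 g + m`. So only finitely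
many trees exist up to isomorphism.
-/

open Finset

theorem Finset.card_filter_one_le_le_sum {α : Type*} (s : Finset α) (f : α → ℕ) :
    #{x ∈ s | 1 ≤ f x} ≤ ∑ x ∈ s, f x :=
  calc #{x ∈ s | 1 ≤ f x} = ∑ x ∈ s with 1 ≤ f x, 1 := card_eq_sum_ones _
    _ ≤ ∑ x ∈ s with 1 ≤ f x, f x := sum_le_sum fun _ hx => (mem_filter.1 hx).2
    _ ≤ ∑ x ∈ s, f x := sum_le_sum_of_subset (filter_subset _ _)

/-- Applied to the numbers of children in a rooted tree: branching vertices are fewer than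
leaves. -/
theorem Finset.card_two_le_add_one_le_card_eq_zero {α : Type*} [Fintype α] (f : α → ℕ)
    (hf : ∑ x, f x + 1 = Fintype.card α) :
    #{x | 2 ≤ f x} + 1 ≤ #{x | f x = 0} := by
  have hpoint : ∀ x, (if 1 ≤ f x then 1 else 0) + (if 2 ≤ f x then 1 else 0) ≤ f x := by
    intro x; split_ifs <;> omega
  have hsum := sum_le_sum fun x (_ : x ∈ univ) => hpoint x
  rw [sum_add_distrib, sum_boole, sum_boole] at hsum
  have hsplit := card_filter_add_card_filter_not (s := univ) fun x => f x = 0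
  have hpos : #{x | ¬ f x = 0} = #{x | 1 ≤ f x} := by
    simp only [Nat.one_le_iff_ne_zero]
  rw [hpos, card_univ] at hsplit
  simp only [Nat.cast_id] at hsum
  omega

abbrev SRTreeData (n : ℕ) :=
  Σ k : ℕ, (Fin k → Fin k) × (Fin k → ℕ) × (Fin n → Fin k) × (Fin k → ℕ)

theorem SRTreeData.finite_of_bounded (n N g B : ℕ) :
    {x : SRTreeData n |
      x.1 ≤ N ∧ (∀ v, x.2.2.1 v ≤ g) ∧ ∀ v, x.2.2.2.2 v ≤ B}.Finite := by
  have hbounded : ∀ k b : ℕ, {f : Fin k → ℕ | ∀ v, f v ≤ b}.Finite := fun k b =>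
    (Set.Finite.pi fun _ => Set.finite_Iic b).subset fun f hf => Set.mem_univ_pi.2 hf
  refine (Set.finite_Iic N).biUnion (fun k _ => ((Set.finite_univ.prod ((hbounded k g).prod
    (Set.finite_univ.prod (hbounded k B)))).image (Sigma.mk k))) |>.subset ?_
  rintro ⟨k, _⟩ ⟨hk, hg, he⟩
  exact Set.mem_biUnion hk ⟨_, ⟨Set.mem_univ _, hg, Set.mem_univ _, he⟩, rfl⟩

namespace SRTree

variable {n m : ℕ} (T : SRTree n m)

def toData : SRTreeData n :=
  ⟨T.k, T.parent, T.genus, T.rleg, T.eleg⟩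

theorem toData_injective : Function.Injective (@toData n m) := by
  rintro ⟨k, _, p, _, _, gen, r, e⟩ ⟨k', _, p', _, _, gen', r', e'⟩ h
  obtain ⟨rfl, h⟩ := Sigma.mk.inj_iff.mp h
  simp only [heq_iff_eq, Prod.mk.injEq] at h
  obtain ⟨rfl, rfl, rfl, rfl⟩ := h
  rfl

theorem one_le_level (v : Fin T.k) : 1 ≤ T.level v := by
  rw [level]; split <;> omega

theorem level_of_ne_zero {v : Fin T.k} (h : (v : ℕ) ≠ 0) :
    T.level v = T.level (T.parent v) + 1 := by
  rw [level, dif_neg h]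

theorem level_eq_one_iff {v : Fin T.k} : T.level v = 1 ↔ (v : ℕ) = 0 := by
  refine ⟨fun h => by_contra fun hv => ?_, fun h => by rw [level, dif_pos h]⟩
  have := T.level_of_ne_zero hv
  have := T.one_le_level (T.parent v)
  omega

theorem level_iterate_parent (j : ℕ) (v : Fin T.k) :
    T.level (T.parent^[j] v) = max (T.level v - j) 1 := by
  induction j generalizing v with
  | zero => have := T.one_le_level v; simp; omega
  | succ j ih =>
    rw [Function.iterate_succ_apply, ih]
    by_cases hv : (v : ℕ) = 0
    · rw [T.parent_root v hv, T.level_eq_one_iff.2 hv]; omega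
    · rw [T.level_of_ne_zero hv]; omega

theorem eq_of_iterate_parent_of_level_eq {v v' w : Fin T.k} {i j : ℕ}
    (hi : T.parent^[i] w = v) (hj : T.parent^[j] w = v')
    (hl : T.level v = T.level v') : v = v' := by
  have h1 := T.level_iterate_parent i w
  have h2 := T.level_iterate_parent j w
  rw [hi] at h1
  rw [hj] at h2
  by_cases hone : T.level v = 1
  · exact Fin.ext ((T.level_eq_one_iff.1 hone).trans (T.level_eq_one_iff.1 (hl ▸ hone)).symm)
  · obtain rfl : i = j := by omega
    exact hi.symm.trans hj

theorem iterate_parent_level_sub_eq {v w : Fin T.k} (h : T.Desc v w) :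
    T.parent^[T.level w - T.level v] w = v := by
  obtain ⟨i, hi⟩ := h
  have hv := T.level_iterate_parent i w
  rw [hi] at hv
  refine T.eq_of_iterate_parent_of_level_eq rfl hi ?_
  rw [T.level_iterate_parent, hv]
  have := T.one_le_level w
  omega

theorem level_le_deg (v : Fin T.k) : T.level v ≤ T.deg :=
  le_sup (mem_univ v)

theorem sum_nRleg : ∑ v, T.nRleg v = n := by
  simpa [nRleg] using (card_eq_sum_card_fiberwise
    (f := T.rleg) (s := univ) (t := univ) fun _ _ => mem_univ _).symm

theorem sum_nChild_add_one : ∑ v, T.nChild v + 1 = T.k := by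
  have hfib := card_eq_sum_card_fiberwise (f := T.parent)
    (s := {w : Fin T.k | (w : ℕ) ≠ 0}) (t := univ) fun _ _ => mem_univ _
  simp only [filter_filter] at hfib
  have hroot : ({w : Fin T.k | ¬ (w : ℕ) ≠ 0} : Finset _) = {T.root} := by
    ext w; simp [root, Fin.ext_iff]
  have hsplit := card_filter_add_card_filter_not (s := univ) fun w : Fin T.k => (w : ℕ) ≠ 0
  rw [hroot, hfib, card_singleton, card_univ, Fintype.card_fin] at hsplit
  exact hsplit

theorem exists_child_of_iterate_parent {v w : Fin T.k} {i : ℕ} (hi : T.parent^[i] w = v)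
    (hwv : w ≠ v) : ∃ z : Fin T.k, (z : ℕ) ≠ 0 ∧ T.parent z = v := by
  induction i generalizing w with
  | zero => exact absurd hi hwv
  | succ i ih =>
    rw [Function.iterate_succ_apply] at hi
    by_cases hp : T.parent w = v
    · refine ⟨w, fun hw0 => hwv ?_, hp⟩
      rwa [T.parent_root w hw0] at hp
    · exact ih hi hp

theorem filter_not_PU_subset :
    ({v | ¬ T.PU v} : Finset (Fin T.k)) ⊆
      ({v | 1 ≤ T.genus v} : Finset _) ∪ ({v | 1 ≤ T.nRleg v} : Finset _) ∪
        ({v | 2 ≤ T.nChild v} : Finset _) ∪ {T.root} := by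
  intro v hv
  rw [mem_filter_univ] at hv
  simp only [PU, valNE] at hv
  simp only [mem_union, mem_filter, mem_univ, true_and, mem_singleton, Fin.ext_iff, root]
  split_ifs at hv <;> omega

variable {T}

theorem level_eq_deg_of_nChild_eq_zero (hC : T.Complete) {v : Fin T.k}
    (hv : T.nChild v = 0) : T.level v = T.deg := by
  obtain ⟨w, ⟨i, hi⟩, hw⟩ := hC.1 v
  by_cases hwv : w = v
  · rwa [← hwv]
  · obtain ⟨z, hz, hpz⟩ := T.exists_child_of_iterate_parent hi hwv
    rw [nChild, card_eq_zero, filter_eq_empty_iff] at hv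
    exact absurd ⟨hz, hpz⟩ (hv (mem_univ z))

theorem card_nChild_eq_zero_le (hC : T.Complete) : #{v | T.nChild v = 0} ≤ n := by
  calc #{v | T.nChild v = 0} ≤ #(univ.image T.rleg) := by
        refine card_le_card fun v hv => ?_
        obtain ⟨j, hj⟩ := hC.2.2.1 v
          (level_eq_deg_of_nChild_eq_zero hC (mem_filter.1 hv).2)
        exact mem_image.2 ⟨j, mem_univ j, hj⟩
    _ ≤ n := card_image_le.trans (by simp)

theorem card_two_le_nChild_le (hC : T.Complete) : #{v | 2 ≤ T.nChild v} ≤ n := by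
  have := card_two_le_add_one_le_card_eq_zero T.nChild
    (by rw [Fintype.card_fin]; exact T.sum_nChild_add_one)
  have := card_nChild_eq_zero_le hC
  omega

theorem deg_le_card_not_PU (hC : T.Complete) : T.deg ≤ #{v | ¬ T.PU v} := by
  have hsurj : Set.SurjOn T.level ↑({v | ¬ T.PU v} : Finset (Fin T.k)) ↑(Icc 1 T.deg) := by
    intro K hK
    obtain ⟨hK1, hK2⟩ := mem_Icc.1 hK
    obtain ⟨v, hv, hPU⟩ := hC.2.2.2 K hK1 hK2
    exact ⟨v, by simpa using hPU, hv⟩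
  simpa using card_le_card_of_surjOn _ hsurj

theorem genus_le {g : ℕ} (hg : T.TotalGenus g) (v : Fin T.k) : T.genus v ≤ g :=
  hg ▸ single_le_sum (fun _ _ => Nat.zero_le _) (mem_univ v)

theorem deg_le {g : ℕ} (hC : T.Complete) (hg : T.TotalGenus g) : T.deg ≤ g + 2 * n + 1 := by
  have hgenus : #{v | 1 ≤ T.genus v} ≤ g :=
    (card_filter_one_le_le_sum _ _).trans hg.le
  have hleg : #{v | 1 ≤ T.nRleg v} ≤ n :=
    (card_filter_one_le_le_sum _ _).trans T.sum_nRleg.le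
  calc T.deg ≤ #{v | ¬ T.PU v} := deg_le_card_not_PU hC
    _ ≤ #(_ ∪ _ ∪ _ ∪ _) := card_le_card T.filter_not_PU_subset
    _ ≤ #{v | 1 ≤ T.genus v} + #{v | 1 ≤ T.nRleg v} + #{v | 2 ≤ T.nChild v} + 1 := by
      grw [card_union_le, card_union_le, card_union_le, card_singleton]
    _ ≤ g + 2 * n + 1 := by have := card_two_le_nChild_le hC; omega

theorem k_le_deg_mul (hC : T.Complete) : T.k ≤ T.deg * n := by
  have hsurj : Set.SurjOn (fun p : ℕ × Fin n => T.parent^[T.deg - p.1] (T.rleg p.2))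
      ↑(Icc 1 T.deg ×ˢ (univ : Finset (Fin n))) ↑(univ : Finset (Fin T.k)) := by
    intro v _
    obtain ⟨w, hvw, hw⟩ := hC.1 v
    obtain ⟨j, rfl⟩ := hC.2.2.1 w hw
    refine ⟨(T.level v, j), ?_, ?_⟩
    · simpa using ⟨T.one_le_level v, T.level_le_deg v⟩
    · simpa [hw] using T.iterate_parent_level_sub_eq hvw
  simpa using card_le_card_of_surjOn _ hsurj

theorem eleg_le {g : ℕ} (hB : T.Balanced) (hA : T.Admissible) (hg : T.TotalGenus g)
    (v : Fin T.k) : T.eleg v ≤ 2 * g + m := by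
  by_cases hv0 : (v : ℕ) = 0
  · obtain rfl : v = T.root := Fin.ext hv0
    rw [hB.1]
    omega
  set K := T.level (T.parent v)
  have hlevel : T.level v = K + 1 := T.level_of_ne_zero hv0
  have hK : 1 ≤ K ∧ K < T.deg := ⟨T.one_le_level _, by have := T.level_le_deg v; omega⟩
  have hq : (T.eleg v : ℤ) - 1 ≤ ∑ w ∈ univ.filter
      (fun w : Fin T.k => (w : ℕ) ≠ 0 ∧ T.level w = K + 1), ((T.eleg w : ℤ) - 1) := by
    refine single_le_sum (f := fun w => (T.eleg w : ℤ) - 1) (fun w hw => ?_)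
      (by simp [hv0, hlevel])
    exact sub_nonneg.2 (by exact_mod_cast hB.2 w (mem_filter.1 hw).2.1)
  have hgK : ∑ u ∈ univ.filter (fun u : Fin T.k => T.level u ≤ K), (T.genus u : ℤ) ≤ g :=
    (sum_le_sum_of_subset_of_nonneg (filter_subset _ _) fun _ _ _ => by positivity).trans
      (by exact_mod_cast hg.le)
  have := hq.trans (hA K hK.1 hK.2)
  omega

end SRTree

theorem statement10_general (g n m : ℕ) :
    {q : Quot (@SRTree.Iso n m) | ∃ T : SRTree n m, Quot.mk _ T = q ∧
        T.Stable ∧ T.TotalGenus g ∧ T.Balanced ∧ T.Complete ∧ T.Admissible}.Finite := by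
  have htrees : {T : SRTree n m | T.TotalGenus g ∧ T.Balanced ∧ T.Complete ∧
      T.Admissible}.Finite := by
    refine Set.Finite.of_finite_image ?_ SRTree.toData_injective.injOn
    refine (SRTreeData.finite_of_bounded n ((g + 2 * n + 1) * n) g (2 * g + m)).subset ?_
    rintro _ ⟨T, ⟨hg, hB, hC, hA⟩, rfl⟩
    refine ⟨?_, T.genus_le hg, T.eleg_le hB hA hg⟩
    calc T.k ≤ T.deg * n := SRTree.k_le_deg_mul hC
      _ ≤ (g + 2 * n + 1) * n := Nat.mul_le_mul_right _ (SRTree.deg_le hC hg)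
  refine (htrees.image (Quot.mk _)).subset ?_
  rintro _ ⟨T, rfl, -, hT⟩
  exact ⟨T, hT, rfl⟩

/-- For every `g ≥ 0`, `n ≥ 1` and `m ≥ 0`, the set
`SRT^{(b,c,a)}_{g,n,m;∘}` of isomorphism classes of admissible complete balanced stable
rooted trees of genus `g` with `n` regular legs, `m` frozen legs and arbitrarily many extra
legs, is finite. -/
theorem statement10 (g n m : ℕ) (hn : 1 ≤ n) :
    {q : Quot (@SRTree.Iso n m) | ∃ T : SRTree n m, Quot.mk _ T = q ∧
        T.Stable ∧ T.TotalGenus g ∧ T.Balanced ∧ T.Complete ∧ T.Admissible}.Finite :=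
  statement10_general g n m
end
end
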